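/- arXiv:1602.08608 — 2 statements merged into one kernel-verified Lean document; each statement's English description precedes it below -/
import Mathlib

section
/- Let G be a second countable LCA group, H ⊆ G a countable discrete subgroup, and V ⊆ L²(G) a translation-invariant closed subspace. Suppose A ⊆ L²(G) is an at most countable set with V equal to the closed span of {T_h φ : h ∈ H, φ ∈ A}. If V = {f ∈ L²(G) : f̂ = 0 a.e. on Ẽ} for a measurable Ẽ ⊆ Ĝ, then Ẽ equals E := ⋂_{φ∈A} {γ : φ̂(γ) = 0} up to a set of Haar measure zero; in particular V = {f ∈ L²(G) : f̂ = 0 a.e. on E}. -/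
/-!
Since every `φ ∈ A` lies in `V`, each `𝓕 φ` vanishes a.e. on `Ẽ`, so `Ẽ ⊆ E` a.e. Conversely
`𝓕 (T_h φ) = e(-h) · 𝓕 φ` vanishes on `E`, and vanishing a.e. on a set is a closed linear
condition, so every `f ∈ V` has `𝓕 f = 0` a.e. on `E`. Applied to the preimage under `𝓕` of the
indicator of a finite-measure piece of `E \ Ẽ` (which lies in `V`), this forces `E ⊆ Ẽ` a.e.
-/

open MeasureTheory
open scoped ENNReal

namespace MeasureTheory.Lp

variable {𝕜 α F ι : Type*} [MeasurableSpace α] {μ : Measure α} {p : ℝ≥0∞} [NormedAddCommGroup F]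
  {s t : Set α}

theorem measurableSet_setOf_forall_eq_zero {I : Set ι} (hI : I.Countable) (f : ι → Lp F p μ) :
    MeasurableSet {x | ∀ i ∈ I, f i x = 0} := by
  simpa only [Set.ofPred_forall] using MeasurableSet.biInter hI fun i _ =>
    (Lp.stronglyMeasurable (f i)).measurableSet_eq_fun stronglyMeasurable_const

variable [NormedRing 𝕜] [Module 𝕜 F] [IsBoundedSMul 𝕜 F] [Fact (1 ≤ p)]

variable (𝕜 μ p) in
noncomputable def vanishingOn (s : Set α) : Submodule 𝕜 (Lp F p μ) :=
  LinearMap.ker (LpToLpRestrictCLM α F 𝕜 μ p s).toLinearMap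

theorem mem_vanishingOn (hs : MeasurableSet s) {f : Lp F p μ} :
    f ∈ vanishingOn 𝕜 μ p s ↔ ∀ᵐ x ∂μ, x ∈ s → f x = 0 := by
  have hf := LpToLpRestrictCLM_coeFn 𝕜 s f
  rw [vanishingOn, LinearMap.mem_ker, ContinuousLinearMap.coe_coe, Lp.eq_zero_iff_ae_eq_zero,
    ← ae_restrict_iff' hs]
  exact ⟨hf.symm.trans, hf.trans⟩

theorem isClosed_vanishingOn :
    IsClosed ((vanishingOn 𝕜 μ p s : Submodule 𝕜 (Lp F p μ)) : Set (Lp F p μ)) :=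
  ContinuousLinearMap.isClosed_ker _

theorem vanishingOn_le_vanishingOn_iff [SigmaFinite μ] [Nontrivial F] (hs : MeasurableSet s)
    (ht : MeasurableSet t) :
    vanishingOn 𝕜 μ p t ≤ (vanishingOn 𝕜 μ p s : Submodule 𝕜 (Lp F p μ)) ↔ s ≤ᵐ[μ] t := by
  refine ⟨fun h => ?_, fun h f hf => ?_⟩
  · rw [ae_le_set]
    by_contra hne
    obtain ⟨S, hS, hSst, hS_pos, hS_fin⟩ :=
      Measure.exists_subset_measure_lt_top (hs.diff ht) (pos_iff_ne_zero.mpr hne)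
    obtain ⟨c, hc⟩ := exists_ne (0 : F)
    have hind := indicatorConstLp_coeFn (p := p) (hs := hS) (hμs := hS_fin.ne) (c := c)
    have hgt : indicatorConstLp p hS hS_fin.ne c ∈ vanishingOn 𝕜 μ p t := by
      rw [mem_vanishingOn ht]
      filter_upwards [hind] with x hx hxt
      rw [hx, Set.indicator_of_notMem fun hxS => (hSst hxS).2 hxt]
    have hgs := (mem_vanishingOn hs).1 (h hgt)
    refine hS_pos.ne' (measure_eq_zero_iff_ae_notMem.2 ?_)
    filter_upwards [hgs, hind] with x hxs hx hxS
    rw [hxs (hSst hxS).1, Set.indicator_of_mem hxS] at hx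
    exact hc hx.symm
  · rw [mem_vanishingOn hs]
    filter_upwards [h, (mem_vanishingOn ht).1 hf] with x hst hft hxs
    exact hft (hst hxs)

theorem vanishingOn_congr_ae [SigmaFinite μ] [Nontrivial F] (hs : MeasurableSet s)
    (ht : MeasurableSet t) (h : s =ᵐ[μ] t) :
    (vanishingOn 𝕜 μ p s : Submodule 𝕜 (Lp F p μ)) = vanishingOn 𝕜 μ p t :=
  le_antisymm ((vanishingOn_le_vanishingOn_iff ht hs).2 h.symm.le)
    ((vanishingOn_le_vanishingOn_iff hs ht).2 h.le)

theorem ae_le_setOf_forall_eq_zero {I : Set ι} (hI : I.Countable) {f : ι → Lp F p μ}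
    (hs : MeasurableSet s) (h : ∀ i ∈ I, f i ∈ vanishingOn 𝕜 μ p s) :
    s ≤ᵐ[μ] {x | ∀ i ∈ I, f i x = 0} := by
  filter_upwards [(ae_ball_iff hI).2 fun i hi => (mem_vanishingOn hs).1 (h i hi)] with x hx hxs
  exact fun i hi => hx i hi hxs

end MeasureTheory.Lp

open Lp

theorem translation_invariant_zero_set_general
    {G : Type*} [AddCommGroup G]
    [MeasurableSpace G] (μ : Measure G)
    {Gh : Type*} [MeasurableSpace Gh] (ν : Measure Gh) [SigmaFinite ν]
    (T : G → (Lp ℂ 2 μ ≃ₗᵢ[ℂ] Lp ℂ 2 μ))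
    (hT : ∀ (x : G) (f : Lp ℂ 2 μ), ∀ᵐ y ∂μ, (T x f) y = f (y - x))
    (e : G → Gh → ℂ)
    (𝓕 : Lp ℂ 2 μ ≃ₗᵢ[ℂ] Lp ℂ 2 ν)
    (h𝓕 : ∀ (x : G) (f : Lp ℂ 2 μ),
      ∀ᵐ γ ∂ν, (𝓕 (T x f)) γ = e (-x) γ * (𝓕 f) γ)
    (Hl : AddSubgroup G)
    (A : Set (Lp ℂ 2 μ)) (hA : A.Countable)
    (V : Submodule ℂ (Lp ℂ 2 μ))
    (hVgen : V = (Submodule.span ℂ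
      {g : Lp ℂ 2 μ | ∃ h ∈ Hl, ∃ φ ∈ A, g = T h φ}).topologicalClosure)
    (Et : Set Gh) (hEt : MeasurableSet Et)
    (hVE : ∀ f : Lp ℂ 2 μ, f ∈ V ↔ ∀ᵐ γ ∂ν, γ ∈ Et → (𝓕 f) γ = 0) :
    ν (symmDiff Et {γ : Gh | ∀ φ ∈ A, (𝓕 φ) γ = 0}) = 0 ∧
    ∀ f : Lp ℂ 2 μ, f ∈ V ↔
      ∀ᵐ γ ∂ν, (∀ φ ∈ A, (𝓕 φ) γ = 0) → (𝓕 f) γ = 0 := by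
  set E : Set Gh := {γ | ∀ φ ∈ A, (𝓕 φ) γ = 0}
  have hE : MeasurableSet E := measurableSet_setOf_forall_eq_zero hA 𝓕
  have hV : V = (vanishingOn ℂ ν 2 Et).comap (𝓕 : Lp ℂ 2 μ →ₗ[ℂ] Lp ℂ 2 ν) := by
    ext f
    rw [Submodule.mem_comap, hVE, mem_vanishingOn hEt]
    rfl
  have hAV : ∀ φ ∈ A, φ ∈ V := fun φ hφ => by
    have hT0 : T 0 φ = φ := Lp.ext (by filter_upwards [hT 0 φ] with y hy; simpa using hy)
    rw [hVgen, ← hT0]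
    exact Submodule.le_topologicalClosure _ (Submodule.subset_span ⟨0, zero_mem _, φ, hφ, rfl⟩)
  have hEtE : Et ≤ᵐ[ν] E :=
    ae_le_setOf_forall_eq_zero hA hEt fun φ hφ => Submodule.mem_comap.1 (hV ▸ hAV φ hφ)
  have hVW : V ≤ (vanishingOn ℂ ν 2 E).comap (𝓕 : Lp ℂ 2 μ →ₗ[ℂ] Lp ℂ 2 ν) := by
    rw [hVgen]
    refine Submodule.topologicalClosure_minimal _ (Submodule.span_le.2 ?_)
      (isClosed_vanishingOn.preimage 𝓕.continuous)
    rintro _ ⟨h, -, φ, hφ, rfl⟩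
    change 𝓕 (T h φ) ∈ vanishingOn ℂ ν 2 E
    rw [mem_vanishingOn hE]
    filter_upwards [h𝓕 h φ] with γ hγ hγE
    rw [hγ, hγE φ hφ, mul_zero]
  have hEEt : E ≤ᵐ[ν] Et := (vanishingOn_le_vanishingOn_iff hE hEt).1 <|
    (Submodule.comap_le_comap_iff_of_surjective 𝓕.surjective).1 (hV ▸ hVW)
  have hEtE_eq : Et =ᵐ[ν] E := hEtE.antisymm hEEt
  refine ⟨measure_symmDiff_eq_zero_iff.2 hEtE_eq, fun f => ?_⟩
  rw [hV, vanishingOn_congr_ae hEt hE hEtE_eq, Submodule.mem_comap, mem_vanishingOn hE]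
  rfl

/-- If a translation-invariant space `V ⊆ L²(G)` is generated, as an `H`-invariant space,
by a countable set `A` (i.e. `V` is the closed span of `{T_h φ : h ∈ H, φ ∈ A}`), and
`V = {f : 𝓕 f = 0 a.e. on Ẽ}`, then `Ẽ` coincides, up to a null set, with
`E = ⋂_{φ ∈ A} {𝓕 φ = 0}`; in particular `V = {f : 𝓕 f = 0 a.e. on E}`. -/
theorem translation_invariant_zero_set
    {G : Type*} [AddCommGroup G] [TopologicalSpace G] [IsTopologicalAddGroup G]
    [LocallyCompactSpace G] [SecondCountableTopology G]
    [MeasurableSpace G] [BorelSpace G]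
    (μ : Measure G) [μ.IsAddHaarMeasure]
    {Gh : Type*} [MeasurableSpace Gh] (ν : Measure Gh) [SigmaFinite ν]
    (T : G → (Lp ℂ 2 μ ≃ₗᵢ[ℂ] Lp ℂ 2 μ))
    (hT : ∀ (x : G) (f : Lp ℂ 2 μ), ∀ᵐ y ∂μ, (T x f) y = f (y - x))
    (e : G → Gh → ℂ) (he_meas : ∀ x, Measurable (e x))
    (he_norm : ∀ x γ, ‖e x γ‖ = 1)
    (he_hom : ∀ x y γ, e (x + y) γ = e x γ * e y γ)
    (hdet : ∀ F : Gh → ℂ, Integrable F ν →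
      (∀ x : G, ∫ γ, F γ * e x γ ∂ν = 0) → F =ᵐ[ν] 0)
    (𝓕 : Lp ℂ 2 μ ≃ₗᵢ[ℂ] Lp ℂ 2 ν)
    (h𝓕 : ∀ (x : G) (f : Lp ℂ 2 μ),
      ∀ᵐ γ ∂ν, (𝓕 (T x f)) γ = e (-x) γ * (𝓕 f) γ)
    (Hl : AddSubgroup G) (hHl_count : (Hl : Set G).Countable)
    (hHl_disc : DiscreteTopology Hl)
    (A : Set (Lp ℂ 2 μ)) (hA : A.Countable)
    (V : Submodule ℂ (Lp ℂ 2 μ))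
    (hVgen : V = (Submodule.span ℂ
      {g : Lp ℂ 2 μ | ∃ h ∈ Hl, ∃ φ ∈ A, g = T h φ}).topologicalClosure)
    (hVti : ∀ (x : G), ∀ f ∈ V, T x f ∈ V)
    (Et : Set Gh) (hEt : MeasurableSet Et)
    (hVE : ∀ f : Lp ℂ 2 μ, f ∈ V ↔ ∀ᵐ γ ∂ν, γ ∈ Et → (𝓕 f) γ = 0) :
    ν (symmDiff Et {γ : Gh | ∀ φ ∈ A, (𝓕 φ) γ = 0}) = 0 ∧
    ∀ f : Lp ℂ 2 μ, f ∈ V ↔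
      ∀ᵐ γ ∂ν, (∀ φ ∈ A, (𝓕 φ) γ = 0) → (𝓕 f) γ = 0 :=
  translation_invariant_zero_set_general μ ν T hT e 𝓕 h𝓕 Hl A hA V hVgen Et hEt hVE
end

section
/- Let (Ω, μ) be a finite measure space, H a separable Hilbert space with L²(Ω) separable, D ⊆ L^∞(Ω) a determining set for L¹(Ω), ℓ ∈ ℕ, and F₁, …, F_m ∈ L²(Ω, H). Suppose J* is a measurable range function such that for a.e. ω ∈ Ω and every subspace W ⊆ H with dim W ≤ ℓ, Σ_{j=1}^m ‖F_j(ω) − P_{J*(ω)} F_j(ω)‖²_H ≤ Σ_{j=1}^m ‖F_j(ω) − P_W F_j(ω)‖²_H. Let M* = {Φ ∈ L²(Ω, H) : Φ(ω) ∈ J*(ω) a.e.}. Then for every D-MI space M ⊆ L²(Ω, H) generated by at most ℓ elements, Σ_{j=1}^m ‖F_j − P_{M*} F_j‖² ≤ Σ_{j=1}^m ‖F_j − P_M F_j‖². -/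
/-!
Projecting `Fⱼ(ω)` pointwise onto `J*(ω)` gives an element of `M*`; it is measurable because the
weak measurability of `ω ↦ P_{J*(ω)}` controls `dist (P_{J*(ω)} a) c` and, `H` being separable,
distances to points detect measurability. Hence the error of `M*` is at most
`∫ Σⱼ d(Fⱼ(ω), J*(ω))²`. For `Ψⱼ ∈ M` we have `Ψⱼ(ω) ∈ J(ω)` with `dim J(ω) ≤ ℓ` a.e., so the
pointwise optimality of `J*` bounds this integrand by `Σⱼ ‖Fⱼ(ω) − Ψⱼ(ω)‖²`; integrating and
taking the infimum over the `Ψⱼ` gives the claim.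
-/

open MeasureTheory Filter Topology Metric
open scoped ComplexInnerProductSpace ENNReal

theorem measurable_of_forall_measurable_dist {α β : Type*} [MeasurableSpace α]
    [PseudoMetricSpace β] [TopologicalSpace.SeparableSpace β] [MeasurableSpace β] [BorelSpace β]
    {g : α → β} (h : ∀ c, Measurable fun x => dist (g x) c) : Measurable g := by
  obtain ⟨T, hTc, hTd⟩ := TopologicalSpace.exists_countable_dense β
  have : Countable T := hTc.to_subtype
  refine measurable_of_isOpen fun s hs => ?_
  have hpre : g ⁻¹' s =
      ⋃ (c : T) (q : ℚ) (_ : ball (c : β) q ⊆ s), {x | dist (g x) c < q} := by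
    ext x
    simp only [Set.mem_preimage, Set.mem_iUnion, Set.mem_ofPred_eq, exists_prop]
    refine ⟨fun hx => ?_, fun ⟨c, q, hsub, hq⟩ => hsub hq⟩
    obtain ⟨ε, hε, hball⟩ := Metric.isOpen_iff.mp hs _ hx
    obtain ⟨c, hcT, hc⟩ := hTd.exists_dist_lt (g x) (half_pos hε)
    obtain ⟨q, hcq, hqε⟩ := exists_rat_btwn hc
    refine ⟨⟨c, hcT⟩, q, (ball_subset_ball' ?_).trans hball, hcq⟩
    rw [dist_comm]
    linarith
  rw [hpre]
  exact .iUnion fun c => .iUnion fun q => .iUnion fun _ => measurableSet_lt (h c) measurable_const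

theorem Submodule.infDist_eq_norm_sub_starProjection {𝕜 E : Type*} [RCLike 𝕜]
    [NormedAddCommGroup E] [InnerProductSpace 𝕜 E] (K : Submodule 𝕜 E)
    [K.HasOrthogonalProjection] (u : E) :
    infDist u (K : Set E) = ‖u - K.starProjection u‖ := by
  rw [infDist_eq_iInf, starProjection_minimal]
  exact iInf_congr fun v => dist_eq_norm _ _

theorem MeasureTheory.Lp.norm_sq_eq_integral_norm_sq {α E : Type*} [MeasurableSpace α] {μ : Measure α}
    [NormedAddCommGroup E] (f : Lp E 2 μ) : ‖f‖ ^ 2 = ∫ ω, ‖f ω‖ ^ 2 ∂μ := by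
  rw [Lp.norm_def, toReal_eLpNorm (Lp.aestronglyMeasurable f),
    lpNorm_eq_integral_norm_rpow_toReal two_ne_zero ENNReal.ofNat_ne_top
      (Lp.aestronglyMeasurable f)]
  simp only [ENNReal.toReal_ofNat, Real.rpow_two]
  rw [← Real.rpow_natCast, ← Real.rpow_mul (integral_nonneg fun ω => by positivity)]
  norm_num

theorem MeasureTheory.Lp.dist_sq_eq_integral_dist_sq {α E : Type*} [MeasurableSpace α] {μ : Measure α}
    [NormedAddCommGroup E] (f g : Lp E 2 μ) : dist f g ^ 2 = ∫ ω, dist (f ω) (g ω) ^ 2 ∂μ := by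
  rw [_root_.dist_eq_norm, Lp.norm_sq_eq_integral_norm_sq]
  refine integral_congr_ae ?_
  filter_upwards [Lp.coeFn_sub f g] with ω hω
  rw [hω, Pi.sub_apply, _root_.dist_eq_norm]

theorem MeasureTheory.Lp.integrable_dist_sq {α E : Type*} [MeasurableSpace α] {μ : Measure α}
    [NormedAddCommGroup E] (f g : Lp E 2 μ) : Integrable (fun ω => dist (f ω) (g ω) ^ 2) μ := by
  simpa only [_root_.dist_eq_norm, Pi.sub_apply] using
    ((Lp.memLp f).sub (Lp.memLp g)).integrable_norm_pow two_ne_zero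

section

variable {𝕜 Ω H : Type*} [RCLike 𝕜] [MeasurableSpace Ω] [NormedAddCommGroup H]
  [InnerProductSpace 𝕜 H] [SecondCountableTopology H] [MeasurableSpace H] [BorelSpace H]
  {J : Ω → Submodule 𝕜 H} [∀ ω, (J ω).HasOrthogonalProjection]
  (hJ : ∀ a b : H, Measurable fun ω => inner 𝕜 ((J ω).starProjection a) b)
include hJ

theorem measurable_starProjection_apply_const (a : H) :
    Measurable fun ω => (J ω).starProjection a := by
  refine measurable_of_forall_measurable_dist fun c => ?_
  have hdist : ∀ ω, dist ((J ω).starProjection a) c =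
      √(RCLike.re (inner 𝕜 ((J ω).starProjection a) a)
        - 2 * RCLike.re (inner 𝕜 ((J ω).starProjection a) c) + ‖c‖ ^ 2) := by
    intro ω
    rw [dist_eq_norm, ← Real.sqrt_sq (norm_nonneg _), @norm_sub_sq 𝕜,
      Submodule.re_inner_starProjection_eq_normSq]
    rfl
  simp only [hdist]
  have := hJ a a
  have := hJ a c
  fun_prop

theorem measurable_uncurry_starProjection :
    Measurable fun p : H × Ω => (J p.2).starProjection p.1 :=
  measurable_uncurry_of_continuous_of_measurable (u := fun a ω => (J ω).starProjection a)
    (fun ω => (J ω).starProjection.continuous) (measurable_starProjection_apply_const hJ)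

variable {μ : Measure Ω}

theorem MeasureTheory.MemLp.starProjection_apply {p : ℝ≥0∞} {f : Ω → H} (hf : MemLp f p μ) :
    MemLp (fun ω => (J ω).starProjection (f ω)) p μ :=
  hf.of_le ((measurable_uncurry_starProjection hJ).comp_aemeasurable
      (hf.aemeasurable.prodMk aemeasurable_id)).aestronglyMeasurable
    (.of_forall fun ω => (J ω).norm_starProjection_apply_le (f ω))

theorem ae_infDist_eq_dist_starProjection_toLp (f : Lp H 2 μ) :
    ∀ᵐ ω ∂μ, infDist (f ω) (J ω) = dist (f ω) (((Lp.memLp f).starProjection_apply hJ).toLp _ ω) := by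
  filter_upwards [((Lp.memLp f).starProjection_apply hJ).coeFn_toLp] with ω hω
  rw [hω, dist_eq_norm, Submodule.infDist_eq_norm_sub_starProjection]

theorem integrable_infDist_sq (f : Lp H 2 μ) :
    Integrable (fun ω => infDist (f ω) (J ω) ^ 2) μ := by
  refine (Lp.integrable_dist_sq f (((Lp.memLp f).starProjection_apply hJ).toLp _)).congr ?_
  filter_upwards [ae_infDist_eq_dist_starProjection_toLp hJ f] with ω hω
  rw [hω]

theorem infDist_setOf_ae_mem_sq_le_integral (f : Lp H 2 μ) :
    infDist f {Φ : Lp H 2 μ | ∀ᵐ ω ∂μ, Φ ω ∈ J ω} ^ 2 ≤ ∫ ω, infDist (f ω) (J ω) ^ 2 ∂μ := by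
  set g := ((Lp.memLp f).starProjection_apply hJ).toLp _
  have hg : ∀ᵐ ω ∂μ, g ω ∈ J ω := by
    filter_upwards [((Lp.memLp f).starProjection_apply hJ).coeFn_toLp] with ω hω
    rw [hω]
    exact (J ω).starProjection_apply_mem _
  calc infDist f {Φ : Lp H 2 μ | ∀ᵐ ω ∂μ, Φ ω ∈ J ω} ^ 2 ≤ dist f g ^ 2 := by
        gcongr
        exacts [infDist_nonneg, infDist_le_dist_of_mem hg]
    _ = ∫ ω, infDist (f ω) (J ω) ^ 2 ∂μ := by
      rw [Lp.dist_sq_eq_integral_dist_sq]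
      refine integral_congr_ae ?_
      filter_upwards [ae_infDist_eq_dist_starProjection_toLp hJ f] with ω hω
      rw [hω]

theorem sum_integral_infDist_sq_le_sum_dist_sq {ι : Type*} [Fintype ι] {K : Ω → Submodule 𝕜 H}
    (F Ψ : ι → Lp H 2 μ) (hΨ : ∀ j, ∀ᵐ ω ∂μ, Ψ j ω ∈ K ω)
    (hle : ∀ᵐ ω ∂μ, ∑ j, infDist (F j ω) (J ω) ^ 2 ≤ ∑ j, infDist (F j ω) (K ω) ^ 2) :
    ∑ j, ∫ ω, infDist (F j ω) (J ω) ^ 2 ∂μ ≤ ∑ j, dist (F j) (Ψ j) ^ 2 := by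
  have hint_J : ∀ j ∈ Finset.univ, Integrable (fun ω => infDist (F j ω) (J ω) ^ 2) μ :=
    fun j _ => integrable_infDist_sq hJ (F j)
  have hint_Ψ : ∀ j ∈ Finset.univ, Integrable (fun ω => dist (F j ω) (Ψ j ω) ^ 2) μ :=
    fun j _ => Lp.integrable_dist_sq (F j) (Ψ j)
  simp_rw [Lp.dist_sq_eq_integral_dist_sq]
  rw [← integral_finsetSum _ hint_J, ← integral_finsetSum _ hint_Ψ]
  refine integral_mono_ae (integrable_finsetSum _ hint_J) (integrable_finsetSum _ hint_Ψ) ?_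
  filter_upwards [hle, ae_all_iff.2 hΨ] with ω hω hΨω
  refine hω.trans (Finset.sum_le_sum fun j _ => ?_)
  exact pow_le_pow_left₀ infDist_nonneg (infDist_le_dist_of_mem (hΨω j)) 2

end

theorem le_sum_infDist_sq_of_forall_mem {X ι : Type*} [PseudoMetricSpace X] [Fintype ι]
    {s : Set X} (hs : s.Nonempty) (x : ι → X) {a : ℝ}
    (h : ∀ ψ : ι → X, (∀ j, ψ j ∈ s) → a ≤ ∑ j, dist (x j) (ψ j) ^ 2) :
    a ≤ ∑ j, infDist (x j) s ^ 2 := by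
  have hlim : Tendsto (fun ε : ℝ => ∑ j, (infDist (x j) s + ε) ^ 2) (𝓝[>] 0)
      (𝓝 (∑ j, (infDist (x j) s + 0) ^ 2)) :=
    ((by fun_prop : Continuous fun ε : ℝ => ∑ j, (infDist (x j) s + ε) ^ 2).tendsto 0).mono_left
      nhdsWithin_le_nhds
  simp only [add_zero] at hlim
  refine ge_of_tendsto hlim (eventually_mem_nhdsWithin.mono fun ε (hε : 0 < ε) => ?_)
  choose ψ hψs hψ using fun j => (infDist_lt_iff hs).1 (lt_add_of_pos_right (infDist (x j) s) hε)
  exact (h ψ hψs).trans (Finset.sum_le_sum fun j _ => pow_le_pow_left₀ dist_nonneg (hψ j).le 2)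

theorem optimal_MI_space_general
    {Ω : Type*} [MeasurableSpace Ω] (μ : Measure Ω)
    {H : Type*} [NormedAddCommGroup H] [InnerProductSpace ℂ H]
    [SecondCountableTopology H]
    (ℓ m : ℕ) (F : Fin m → Lp H 2 μ)
    (Jstar : Ω → Submodule ℂ H) [instJs : ∀ ω, CompleteSpace (Jstar ω)]
    (hJstar_meas : ∀ a b : H,
      Measurable fun ω => ⟪((Jstar ω).orthogonalProjectionOnto a : H), b⟫)
    (hopt : ∀ᵐ ω ∂μ, ∀ W : Submodule ℂ H, FiniteDimensional ℂ W →
      Module.finrank ℂ W ≤ ℓ →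
      ∑ j, (Metric.infDist ((F j : Ω → H) ω) (Jstar ω : Set H)) ^ 2 ≤
        ∑ j, (Metric.infDist ((F j : Ω → H) ω) (W : Set H)) ^ 2) :
    ∀ (M : Submodule ℂ (Lp H 2 μ)) (J : Ω → Submodule ℂ H),
      (∀ ω, IsClosed ((J ω) : Set H)) →
      (∀ Φ : Lp H 2 μ, Φ ∈ M ↔ ∀ᵐ ω ∂μ, Φ ω ∈ J ω) →
      (∀ᵐ ω ∂μ, Module.rank ℂ (J ω) ≤ ℓ) →
      ∑ j, (Metric.infDist (F j)
          {Φ : Lp H 2 μ | ∀ᵐ ω ∂μ, Φ ω ∈ Jstar ω}) ^ 2 ≤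
        ∑ j, (Metric.infDist (F j) (M : Set (Lp H 2 μ))) ^ 2 := by
  intro M J _ hM hJdim
  borelize H
  have hpt : ∀ᵐ ω ∂μ,
      ∑ j, infDist (F j ω) (Jstar ω) ^ 2 ≤ ∑ j, infDist (F j ω) (J ω) ^ 2 := by
    filter_upwards [hJdim, hopt] with ω hdim hω
    have : FiniteDimensional ℂ (J ω) :=
      Module.rank_lt_aleph0_iff.mp (hdim.trans_lt Cardinal.natCast_lt_aleph0)
    exact hω _ this (Module.finrank_le_of_rank_le hdim)
  calc ∑ j, infDist (F j) {Φ : Lp H 2 μ | ∀ᵐ ω ∂μ, Φ ω ∈ Jstar ω} ^ 2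
      ≤ ∑ j, ∫ ω, infDist (F j ω) (Jstar ω) ^ 2 ∂μ :=
        Finset.sum_le_sum fun j _ => infDist_setOf_ae_mem_sq_le_integral hJstar_meas (F j)
    _ ≤ ∑ j, infDist (F j) (M : Set (Lp H 2 μ)) ^ 2 :=
        le_sum_infDist_sq_of_forall_mem ⟨0, M.zero_mem⟩ F fun Ψ hΨ =>
          sum_integral_infDist_sq_le_sum_dist_sq hJstar_meas F Ψ (fun j => (hM _).1 (hΨ j)) hpt

/-- Optimality of the MI space built from a pointwise optimal measurable range function:
if for a.e. `ω` the space `J*(ω)` minimizes `Σⱼ ‖Fⱼ(ω) − P_W Fⱼ(ω)‖²` over all subspaces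
`W ⊆ H` of dimension at most `ℓ`, then the associated MI space
`M* = {Φ : Φ(ω) ∈ J*(ω) a.e.}` minimizes `Σⱼ ‖Fⱼ − P_M Fⱼ‖²` over all `D`-MI spaces `M`
of length at most `ℓ` (equivalently, with range function of dimension at most `ℓ` a.e.).
Errors are expressed via distances, since `‖F − P_M F‖ = dist F M` for closed `M`. -/
theorem optimal_MI_space
    {Ω : Type*} [MeasurableSpace Ω] (μ : Measure Ω) [IsFiniteMeasure μ]
    {H : Type*} [NormedAddCommGroup H] [InnerProductSpace ℂ H] [CompleteSpace H]
    [SecondCountableTopology H]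
    (D : Set (Ω → ℂ)) (hD_mem : ∀ g ∈ D, MemLp g ∞ μ)
    (hD_det : ∀ f : Ω → ℂ, Integrable f μ →
      (∀ g ∈ D, ∫ ω, f ω * g ω ∂μ = 0) → f =ᵐ[μ] 0)
    (ℓ m : ℕ) (F : Fin m → Lp H 2 μ)
    (Jstar : Ω → Submodule ℂ H) [instJs : ∀ ω, CompleteSpace (Jstar ω)]
    (hJstar_meas : ∀ a b : H,
      Measurable fun ω => ⟪((Jstar ω).orthogonalProjectionOnto a : H), b⟫)
    (hJstar_dim : ∀ᵐ ω ∂μ, Module.rank ℂ (Jstar ω) ≤ ℓ)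
    (hopt : ∀ᵐ ω ∂μ, ∀ W : Submodule ℂ H, FiniteDimensional ℂ W →
      Module.finrank ℂ W ≤ ℓ →
      ∑ j, (Metric.infDist ((F j : Ω → H) ω) (Jstar ω : Set H)) ^ 2 ≤
        ∑ j, (Metric.infDist ((F j : Ω → H) ω) (W : Set H)) ^ 2) :
    ∀ (M : Submodule ℂ (Lp H 2 μ)) (J : Ω → Submodule ℂ H),
      (∀ ω, IsClosed ((J ω) : Set H)) →
      (∀ Φ : Lp H 2 μ, Φ ∈ M ↔ ∀ᵐ ω ∂μ, Φ ω ∈ J ω) →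
      (∀ᵐ ω ∂μ, Module.rank ℂ (J ω) ≤ ℓ) →
      ∑ j, (Metric.infDist (F j)
          {Φ : Lp H 2 μ | ∀ᵐ ω ∂μ, Φ ω ∈ Jstar ω}) ^ 2 ≤
        ∑ j, (Metric.infDist (F j) (M : Set (Lp H 2 μ))) ^ 2 :=
  optimal_MI_space_general μ ℓ m F Jstar (instJs := instJs) hJstar_meas hopt
end
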